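/- Let μ be real and σ > 0, and let X12, X23, X13 be real random variables on a probability space such that X13 is distributed as N(μ, σ^2), X12 + X23 is distributed as N(2μ, 2.27σ^2), X23 − X12 and X12 − X23 are each distributed as N(0, 1.73σ^2), and X13 is independent of X12 + X23, of X23 − X12, and of X12 − X23. Then the probability that the triangle is broken satisfies P({X12 + X23 < X13} ∪ {X12 + X13 < X23} ∪ {X13 + X23 < X12}) ≤ 2·Φ(−μ/(√2.73 · σ)) + Φ(−μ/(√3.27 · σ)). -/

import Mathlib

open MeasureTheory ProbabilityTheory Set
open scoped NNReal

/-!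
Each broken event is `{U < V}` for one of the independent pairs `(X12 + X23, X13)`,
`(X13, X23 - X12)`, `(X13, X12 - X23)`. Independence makes `U - V` Gaussian with the sum of the
two variances, so each event has probability `Φ((E V - E U) / sd (U - V))`, and the union bound
adds the three.
-/

namespace ProbabilityTheory

variable {Ω : Type*} {mΩ : MeasurableSpace Ω} {P : Measure Ω} {X Y : Ω → ℝ}

lemma gaussianReal_sub_gaussianReal_of_indepFun {m₁ m₂ : ℝ} {v₁ v₂ : ℝ≥0}
    (hXY : IndepFun X Y P)
    (hX : P.map X = gaussianReal m₁ v₁) (hY : P.map Y = gaussianReal m₂ v₂) :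
    P.map (fun ω ↦ X ω - Y ω) = gaussianReal (m₁ - m₂) (v₁ + v₂) := by
  have hY_meas : AEMeasurable Y P := .of_map_ne_zero (by simp [NeZero.ne, hY])
  have hnegY : P.map (Neg.neg ∘ Y) = gaussianReal (-m₂) v₂ := by
    rw [← AEMeasurable.map_map_of_aemeasurable measurable_neg.aemeasurable hY_meas, hY,
      gaussianReal_map_neg]
  simpa [sub_eq_add_neg, Function.comp_def, Pi.add_def] using
    gaussianReal_add_gaussianReal_of_indepFun (hXY.comp measurable_id measurable_neg) hX hnegY

lemma gaussianReal_real_Iio_zero (m : ℝ) {v : ℝ≥0} (hv : v ≠ 0) :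
    (gaussianReal m v).real (Iio 0) = cdf (gaussianReal 0 1) (-m / √v) := by
  have hsqrt : 0 < √(v : ℝ) := Real.sqrt_pos.mpr (by positivity)
  have hstd : (gaussianReal m v).map (fun x ↦ (x - m) / √v) = gaussianReal 0 1 := by
    rw [show (fun x ↦ (x - m) / √v) = (· / √v) ∘ (· - m) from rfl,
      ← Measure.map_map (by fun_prop) (by fun_prop), gaussianReal_map_sub_const,
      gaussianReal_map_div_const, sub_self, zero_div]
    congr
    ext
    simp [hv]
  have hpre : (fun x ↦ (x - m) / √v) ⁻¹' Iic (-m / √v) = Iic 0 := by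
    ext x
    simp [div_le_div_iff_of_pos_right hsqrt]
  rw [cdf_eq_real, ← hstd, map_measureReal_apply (by fun_prop) measurableSet_Iic, hpre]
  have := nullSingletonClass_gaussianReal (μ := m) hv
  exact measureReal_congr Iio_ae_eq_Iic

lemma measureReal_lt_of_indepFun_gaussianReal {m₁ m₂ : ℝ} {v₁ v₂ : ℝ≥0}
    (hXY : IndepFun X Y P)
    (hX : P.map X = gaussianReal m₁ v₁) (hY : P.map Y = gaussianReal m₂ v₂) (hv : v₁ + v₂ ≠ 0) :
    P.real {ω | X ω < Y ω} = cdf (gaussianReal 0 1) ((m₂ - m₁) / √(v₁ + v₂ : ℝ≥0)) := by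
  have hlaw := gaussianReal_sub_gaussianReal_of_indepFun hXY hX hY
  have hmeas : AEMeasurable (fun ω ↦ X ω - Y ω) P := .of_map_ne_zero (by simp [NeZero.ne, hlaw])
  have hset : {ω | X ω < Y ω} = (fun ω ↦ X ω - Y ω) ⁻¹' Iio 0 := by ext; simp
  rw [hset, ← map_measureReal_apply_of_aemeasurable hmeas measurableSet_Iio, hlaw,
    gaussianReal_real_Iio_zero _ hv, neg_sub]

lemma measureReal_lt_of_indepFun_gaussianReal_mul_sq {m₁ m₂ a b σ : ℝ}
    (hXY : IndepFun X Y P)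
    (hX : P.map X = gaussianReal m₁ (a * σ ^ 2).toNNReal)
    (hY : P.map Y = gaussianReal m₂ (b * σ ^ 2).toNNReal) (ha : 0 < a) (hb : 0 ≤ b) (hσ : 0 < σ) :
    P.real {ω | X ω < Y ω} = cdf (gaussianReal 0 1) ((m₂ - m₁) / (√(a + b) * σ)) := by
  have hv : (a * σ ^ 2).toNNReal + (b * σ ^ 2).toNNReal ≠ 0 :=
    (add_pos_of_pos_of_nonneg (Real.toNNReal_pos.mpr (by positivity)) (by positivity)).ne'
  rw [measureReal_lt_of_indepFun_gaussianReal hXY hX hY hv, NNReal.coe_add,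
    Real.coe_toNNReal _ (by positivity), Real.coe_toNNReal _ (by positivity), ← add_mul,
    Real.sqrt_mul (by positivity), Real.sqrt_sq hσ.le]

end ProbabilityTheory

theorem broken_triangle_probability_le_general {Ω : Type*} [MeasureSpace Ω]
    (μ σ : ℝ) (hσ : 0 < σ) (X12 X23 X13 : Ω → ℝ)
    (h13 : Measure.map X13 ℙ = gaussianReal μ (σ ^ 2).toNNReal)
    (hsum : Measure.map (fun ω => X12 ω + X23 ω) ℙ
      = gaussianReal (2 * μ) (2.27 * σ ^ 2).toNNReal)
    (hdiff1 : Measure.map (fun ω => X23 ω - X12 ω) ℙ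
      = gaussianReal 0 (1.73 * σ ^ 2).toNNReal)
    (hdiff2 : Measure.map (fun ω => X12 ω - X23 ω) ℙ
      = gaussianReal 0 (1.73 * σ ^ 2).toNNReal)
    (hind1 : IndepFun X13 (fun ω => X12 ω + X23 ω) ℙ)
    (hind2 : IndepFun X13 (fun ω => X23 ω - X12 ω) ℙ)
    (hind3 : IndepFun X13 (fun ω => X12 ω - X23 ω) ℙ) :
    (ℙ ({ω | X12 ω + X23 ω < X13 ω} ∪ {ω | X12 ω + X13 ω < X23 ω}
        ∪ {ω | X13 ω + X23 ω < X12 ω})).toReal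
      ≤ 2 * cdf (gaussianReal 0 1) (-μ / (Real.sqrt 2.73 * σ))
        + cdf (gaussianReal 0 1) (-μ / (Real.sqrt 3.27 * σ)) := by
  rw [← one_mul (σ ^ 2)] at h13
  have hA := measureReal_lt_of_indepFun_gaussianReal_mul_sq hind1.symm hsum h13
    (by norm_num) zero_le_one hσ
  have hB := measureReal_lt_of_indepFun_gaussianReal_mul_sq hind2 h13 hdiff1
    one_pos (by norm_num) hσ
  have hC := measureReal_lt_of_indepFun_gaussianReal_mul_sq hind3 h13 hdiff2
    one_pos (by norm_num) hσ
  simp_rw [lt_sub_iff_add_lt'] at hB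
  simp_rw [lt_sub_iff_add_lt] at hC
  rw [show (2.27 : ℝ) + 1 = 3.27 by norm_num, show μ - 2 * μ = -μ by ring] at hA
  rw [show (1 : ℝ) + 1.73 = 2.73 by norm_num, zero_sub] at hB hC
  calc (ℙ : Measure Ω).real (_ ∪ _ ∪ _)
      ≤ (ℙ : Measure Ω).real {ω | X12 ω + X23 ω < X13 ω}
        + (ℙ : Measure Ω).real {ω | X12 ω + X13 ω < X23 ω}
        + (ℙ : Measure Ω).real {ω | X13 ω + X23 ω < X12 ω} :=
        (measureReal_union_le _ _).trans (by gcongr; exact measureReal_union_le _ _)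
    _ = _ := by rw [hA, hB, hC]; ring

/-- Under the Gaussian model for the three triangle edges (without assuming the
three broken events are disjoint), the probability that the triangle is broken
is at most `2Φ(-μ/(√2.73 σ)) + Φ(-μ/(√3.27 σ))`. -/
theorem broken_triangle_probability_le {Ω : Type*} [MeasureSpace Ω]
    [IsProbabilityMeasure (ℙ : Measure Ω)]
    (μ σ : ℝ) (hσ : 0 < σ) (X12 X23 X13 : Ω → ℝ)
    (h13 : Measure.map X13 ℙ = gaussianReal μ (σ ^ 2).toNNReal)
    (hsum : Measure.map (fun ω => X12 ω + X23 ω) ℙ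
      = gaussianReal (2 * μ) (2.27 * σ ^ 2).toNNReal)
    (hdiff1 : Measure.map (fun ω => X23 ω - X12 ω) ℙ
      = gaussianReal 0 (1.73 * σ ^ 2).toNNReal)
    (hdiff2 : Measure.map (fun ω => X12 ω - X23 ω) ℙ
      = gaussianReal 0 (1.73 * σ ^ 2).toNNReal)
    (hind1 : IndepFun X13 (fun ω => X12 ω + X23 ω) ℙ)
    (hind2 : IndepFun X13 (fun ω => X23 ω - X12 ω) ℙ)
    (hind3 : IndepFun X13 (fun ω => X12 ω - X23 ω) ℙ) :
    (ℙ ({ω | X12 ω + X23 ω < X13 ω} ∪ {ω | X12 ω + X13 ω < X23 ω}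
        ∪ {ω | X13 ω + X23 ω < X12 ω})).toReal
      ≤ 2 * cdf (gaussianReal 0 1) (-μ / (Real.sqrt 2.73 * σ))
        + cdf (gaussianReal 0 1) (-μ / (Real.sqrt 3.27 * σ)) :=
  broken_triangle_probability_le_general μ σ hσ X12 X23 X13 h13 hsum hdiff1 hdiff2 hind1 hind2 hind3
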